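/- Let H be a real Hilbert space, V ⊆ H a closed subspace, and a : H → H' an operator that is strongly monotone along V, i.e. there is γ > 0 with (a(x) − a(y))[x − y] ≥ γ ‖x − y‖² whenever x − y ∈ V, and Lipschitz-type continuous: ‖a(x) − a(y)‖_{H'} ≤ L(1 + ‖x‖^{ρ-2} + ‖y‖^{ρ-2}) ‖x − y‖ for some L > 0 and ρ ∈ [3,4]. Suppose u, u_h, w ∈ H satisfy u − u_h − w ∈ V and (a(u) − a(u_h))[z] = R(z) for z := u − u_h − w, where R ∈ H'. Then γ ‖z‖ ≤ L (1 + ‖u − w‖^{ρ-2} + ‖u‖^{ρ-2}) ‖w‖ + ‖R‖_{H'}. -/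

import Mathlib

/-! Apply strong monotonicity to the pair `u - w`, `u_h`, whose difference is `z`. Since
`(a u - a u_h) z = R z`, the right-hand side is the functional `(a (u - w) - a u) + R` evaluated
at `z`; dividing by `‖z‖` bounds `γ ‖z‖` by its dual norm, and the Lipschitz bound on
`a (u - w) - a u` finishes the estimate. -/

theorem mul_norm_le_opNorm_of_mul_sq_le {E : Type*} [SeminormedAddCommGroup E]
    [NormedSpace ℝ E] {γ : ℝ} {φ : E →L[ℝ] ℝ} {z : E} (h : γ * ‖z‖ ^ 2 ≤ φ z) :
    γ * ‖z‖ ≤ ‖φ‖ := by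
  rcases (norm_nonneg z).eq_or_lt with hz | hz
  · simp [← hz]
  · refine le_of_mul_le_mul_right ?_ hz
    calc γ * ‖z‖ * ‖z‖ = γ * ‖z‖ ^ 2 := by ring
      _ ≤ φ z := h
      _ ≤ ‖φ‖ * ‖z‖ := (le_abs_self _).trans (φ.le_opNorm z)

theorem stmt5_general {H : Type*} [NormedAddCommGroup H] [InnerProductSpace ℝ H]
    (V : Submodule ℝ H)
    (a : H → (H →L[ℝ] ℝ)) (γ L ρ : ℝ)
    (hmono : ∀ x y : H, x - y ∈ V → γ * ‖x - y‖ ^ 2 ≤ a x (x - y) - a y (x - y))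
    (hlip : ∀ x y : H, ‖a x - a y‖ ≤ L * (1 + ‖x‖ ^ (ρ - 2) + ‖y‖ ^ (ρ - 2)) * ‖x - y‖)
    (u u_h w : H) (R : H →L[ℝ] ℝ)
    (hz : u - u_h - w ∈ V)
    (hR : a u (u - u_h - w) - a u_h (u - u_h - w) = R (u - u_h - w)) :
    γ * ‖u - u_h - w‖ ≤
      L * (1 + ‖u - w‖ ^ (ρ - 2) + ‖u‖ ^ (ρ - 2)) * ‖w‖ + ‖R‖ := by
  set z := u - u_h - w
  have hdiff : u - w - u_h = z := sub_right_comm u w u_h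
  have hcoercive : γ * ‖z‖ ^ 2 ≤ (a (u - w) - a u + R) z := by
    have hmono' := hmono (u - w) u_h (hdiff ▸ hz)
    rw [hdiff] at hmono'
    calc γ * ‖z‖ ^ 2 ≤ a (u - w) z - a u_h z := hmono'
      _ = (a (u - w) - a u + R) z := by
        rw [add_apply, sub_apply, ← hR]
        ring
  calc γ * ‖z‖ ≤ ‖a (u - w) - a u + R‖ := mul_norm_le_opNorm_of_mul_sq_le hcoercive
    _ ≤ ‖a (u - w) - a u‖ + ‖R‖ := norm_add_le _ _
    _ ≤ _ := by
      gcongr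
      simpa using hlip (u - w) u

theorem stmt5 {H : Type*} [NormedAddCommGroup H] [InnerProductSpace ℝ H] [CompleteSpace H]
    (V : Submodule ℝ H) (hV : IsClosed (V : Set H))
    (a : H → (H →L[ℝ] ℝ)) (γ L ρ : ℝ) (hγ : 0 < γ) (hL : 0 < L)
    (hρ : ρ ∈ Set.Icc (3:ℝ) 4)
    (hmono : ∀ x y : H, x - y ∈ V → γ * ‖x - y‖ ^ 2 ≤ a x (x - y) - a y (x - y))
    (hlip : ∀ x y : H, ‖a x - a y‖ ≤ L * (1 + ‖x‖ ^ (ρ - 2) + ‖y‖ ^ (ρ - 2)) * ‖x - y‖)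
    (u u_h w : H) (R : H →L[ℝ] ℝ)
    (hz : u - u_h - w ∈ V)
    (hR : a u (u - u_h - w) - a u_h (u - u_h - w) = R (u - u_h - w)) :
    γ * ‖u - u_h - w‖ ≤
      L * (1 + ‖u - w‖ ^ (ρ - 2) + ‖u‖ ^ (ρ - 2)) * ‖w‖ + ‖R‖ :=
  stmt5_general V a γ L ρ hmono hlip u u_h w R hz hR
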